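/- Let A be a commutative ring, M an A-module, and x, y_1,...,y_n ∈ A. If x is a regular element on M (i.e. multiplication by x is injective on M), then for all i there is an isomorphism H_i(x, y_1,...,y_n; M) ≅ H_i(y_1,...,y_n; M/xM). -/

import Mathlib

open CategoryTheory

/-- The Koszul complex of a list of elements of `A` with coefficients in the module `M`,
realized as a cochain complex with `K_i` placed in cohomological degree `-i`,
built by iterated mapping cones: `K(a :: xs; M) = cone(a • 𝟙 (K(xs; M)))`. -/
noncomputable def koszulComplex (A : Type) [CommRing A] (M : ModuleCat A) :
    List A → CochainComplex (ModuleCat A) ℤ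
  | [] => (HomologicalComplex.single (ModuleCat A) (ComplexShape.up ℤ) 0).obj M
  | a :: xs => CochainComplex.mappingCone (a • 𝟙 (koszulComplex A M xs))

/-- The `i`-th Koszul homology module `H_i(x₁,...,xₙ; M)`. -/
noncomputable def koszulHomology (A : Type) [CommRing A] (M : ModuleCat A)
    (xs : List A) (i : ℕ) : ModuleCat A :=
  (koszulComplex A M xs).homology (-(i : ℤ))

/-!
Since `x` is regular on `M`, the sequence `0 → M → M → M/xM → 0` (the first map being
multiplication by `x`) is exact. The Koszul complex `K(y; -)` is an exact functor: a mapping cone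
is `K^{n+1} × L^n` in degree `n`, so by induction every term of `K(y; M)` is a finite product of
copies of `M`, functorially in `M`. Hence
`0 → K(y; M) → K(y; M) → K(y; M/xM) → 0` is a short exact sequence of complexes whose first map is
multiplication by `x`. Its mapping cone is `K(x, y; M)` by definition, and the mapping cone of the
first map of a short exact sequence of complexes is quasi-isomorphic to the third term.
-/

lemma Function.Exact.prodMap {M N P M' N' P' : Type*} [Zero P] [Zero P'] {f : M → N}
    {g : N → P} {f' : M' → N'} {g' : N' → P'} (h : Function.Exact f g)
    (h' : Function.Exact f' g') : Function.Exact (Prod.map f f') (Prod.map g g') := by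
  rintro ⟨y, y'⟩
  simp [Prod.ext_iff, h y, h' y']

instance HomologicalComplex.single_linear {R V ι : Type*} [Semiring R] [Category* V]
    [Preadditive V] [Linear R V] [Limits.HasZeroObject V] [DecidableEq ι] (c : ComplexShape ι)
    (j : ι) : (single V c j).Linear R where
  map_smul f r := by
    refine HomologicalComplex.hom_ext _ _ fun i => ?_
    by_cases h : i = j
    · subst h
      simp [single_map_f_self]
    · exact (isZero_single_obj_X c j _ i h).eq_of_src _ _

namespace CochainComplex.mappingCone

section Preadditive

variable {C : Type*} [Category* C] [Preadditive C] [Limits.HasBinaryBiproducts C]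
  {K₁ L₁ K₂ L₂ : CochainComplex C ℤ} (φ₁ : K₁ ⟶ L₁) (φ₂ : K₂ ⟶ L₂)

lemma map_add {a a' : K₁ ⟶ K₂} {b b' : L₁ ⟶ L₂} (comm : φ₁ ≫ b = a ≫ φ₂)
    (comm' : φ₁ ≫ b' = a' ≫ φ₂) :
    map φ₁ φ₂ (a + a') (b + b') (by simp [comm, comm']) =
      map φ₁ φ₂ a b comm + map φ₁ φ₂ a' b' comm' := by
  ext n
  simp [ext_from_iff _ (n + 1) n rfl, map]

lemma map_smul {R : Type*} [Semiring R] [Linear R C] {a : K₁ ⟶ K₂} {b : L₁ ⟶ L₂}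
    (comm : φ₁ ≫ b = a ≫ φ₂) (r : R) :
    map φ₁ φ₂ (r • a) (r • b) (by simp [comm]) = r • map φ₁ φ₂ a b comm := by
  ext n
  simp [ext_from_iff _ (n + 1) n rfl, map]

variable (a : K₁ ⟶ K₂) (b : L₁ ⟶ L₂) (comm : φ₁ ≫ b = a ≫ φ₂)

lemma map_f_fst_v (n m : ℤ) (h : n + 1 = m) :
    (map φ₁ φ₂ a b comm).f n ≫ (fst φ₂).1.v n m h = (fst φ₁).1.v n m h ≫ a.f m := by
  simp [ext_from_iff _ m n h, map]

lemma map_f_snd_v (n : ℤ) :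
    (map φ₁ φ₂ a b comm).f n ≫ (snd φ₂).v n n (add_zero n) =
      (snd φ₁).v n n (add_zero n) ≫ b.f n := by
  simp [ext_from_iff _ (n + 1) n rfl, map]

end Preadditive

section ModuleCat

variable {R : Type*} [Ring R]

noncomputable def XLinearEquivProd {K L : CochainComplex (ModuleCat R) ℤ} (φ : K ⟶ L)
    (n m : ℤ) (h : n + 1 = m) : (mappingCone φ).X n ≃ₗ[R] K.X m × L.X n :=
  LinearEquiv.ofLinearMap (((fst φ).1.v n m h).hom.prod ((snd φ).v n n (add_zero n)).hom)
    (((inl φ).v m n (by omega)).hom.coprod ((inr φ).f n).hom)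
    (by
      apply LinearMap.prod_ext <;> apply LinearMap.ext <;> intro u <;>
        simp [← ModuleCat.comp_apply])
    (by
      simpa [LinearMap.coprod_comp_prod] using congrArg ModuleCat.Hom.hom (id_X φ n m h))

variable {K₁ L₁ K₂ L₂ : CochainComplex (ModuleCat R) ℤ} (φ₁ : K₁ ⟶ L₁) (φ₂ : K₂ ⟶ L₂)
  (a : K₁ ⟶ K₂) (b : L₁ ⟶ L₂) (comm : φ₁ ≫ b = a ≫ φ₂)

lemma prodMap_comp_XLinearEquivProd (n m : ℤ) (h : n + 1 = m) :
    (a.f m).hom.prodMap (b.f n).hom ∘ₗ (XLinearEquivProd φ₁ n m h).toLinearMap =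
      (XLinearEquivProd φ₂ n m h).toLinearMap ∘ₗ ((map φ₁ φ₂ a b comm).f n).hom := by
  ext z
  · exact (ConcreteCategory.congr_hom (map_f_fst_v φ₁ φ₂ a b comm n m h) z).symm
  · exact (ConcreteCategory.congr_hom (map_f_snd_v φ₁ φ₂ a b comm n) z).symm

lemma injective_map_f (n m : ℤ) (h : n + 1 = m) (ha : Function.Injective (a.f m))
    (hb : Function.Injective (b.f n)) : Function.Injective ((map φ₁ φ₂ a b comm).f n) := by
  have hinj : Function.Injective ((a.f m).hom.prodMap (b.f n).hom ∘ₗ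
      (XLinearEquivProd φ₁ n m h).toLinearMap) :=
    (ha.prodMap hb).comp (XLinearEquivProd φ₁ n m h).injective
  rw [prodMap_comp_XLinearEquivProd φ₁ φ₂ a b comm, LinearMap.coe_comp,
    LinearEquiv.coe_coe] at hinj
  exact (EquivLike.comp_injective _ _).mp hinj

lemma surjective_map_f (n m : ℤ) (h : n + 1 = m) (ha : Function.Surjective (a.f m))
    (hb : Function.Surjective (b.f n)) : Function.Surjective ((map φ₁ φ₂ a b comm).f n) := by
  have hsurj : Function.Surjective ((a.f m).hom.prodMap (b.f n).hom ∘ₗ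
      (XLinearEquivProd φ₁ n m h).toLinearMap) :=
    (ha.prodMap hb).comp (XLinearEquivProd φ₁ n m h).surjective
  rw [prodMap_comp_XLinearEquivProd φ₁ φ₂ a b comm, LinearMap.coe_comp,
    LinearEquiv.coe_coe] at hsurj
  exact (EquivLike.comp_surjective _ _).mp hsurj

lemma exact_map_f {K₃ L₃ : CochainComplex (ModuleCat R) ℤ} (φ₃ : K₃ ⟶ L₃) (a' : K₂ ⟶ K₃)
    (b' : L₂ ⟶ L₃) (comm' : φ₂ ≫ b' = a' ≫ φ₃) (n m : ℤ) (h : n + 1 = m)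
    (ha : Function.Exact (a.f m) (a'.f m)) (hb : Function.Exact (b.f n) (b'.f n)) :
    Function.Exact ((map φ₁ φ₂ a b comm).f n) ((map φ₂ φ₃ a' b' comm').f n) :=
  (Function.Exact.iff_of_ladder_linearEquiv
    (prodMap_comp_XLinearEquivProd φ₁ φ₂ a b comm n m h)
    (prodMap_comp_XLinearEquivProd φ₂ φ₃ a' b' comm' n m h)).mp (ha.prodMap hb)

end ModuleCat

end CochainComplex.mappingCone

namespace CochainComplex

section

variable {C D : Type*} [Category* C] [Category* D] [Preadditive D]
  [Limits.HasBinaryBiproducts D] {F G : C ⥤ CochainComplex D ℤ}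

@[simps]
noncomputable def mappingConeFunctor (τ : F ⟶ G) : C ⥤ CochainComplex D ℤ where
  obj X := mappingCone (τ.app X)
  map f := mappingCone.map _ _ (F.map f) (G.map f) (τ.naturality f).symm
  map_id X := by
    ext n
    simp [mappingCone.ext_from_iff _ (n + 1) n rfl, mappingCone.map]
  map_comp f g := by
    ext n
    simp [mappingCone.ext_from_iff _ (n + 1) n rfl, mappingCone.map]

instance [Preadditive C] [F.Additive] [G.Additive] (τ : F ⟶ G) :
    (mappingConeFunctor τ).Additive where
  map_add := by
    simp only [mappingConeFunctor_map, Functor.map_add]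
    exact mappingCone.map_add _ _ _ _

instance {R : Type*} [Semiring R] [Preadditive C] [Linear R C] [Linear R D]
    [F.Linear R] [G.Linear R] (τ : F ⟶ G) : (mappingConeFunctor τ).Linear R where
  map_smul f r := by
    simp only [mappingConeFunctor_map, Functor.map_smul]
    exact mappingCone.map_smul _ _ _ _

end

lemma shortExact_map_mappingConeFunctor {C R : Type*} [Category* C] [Preadditive C] [Ring R]
    {F G : C ⥤ CochainComplex (ModuleCat R) ℤ} [F.Additive] [G.Additive] (τ : F ⟶ G)
    {S : ShortComplex C} (hF : (S.map F).ShortExact) (hG : (S.map G).ShortExact) :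
    (S.map (mappingConeFunctor τ)).ShortExact := by
  rw [HomologicalComplex.shortExact_iff_degreewise_shortExact] at hF hG ⊢
  intro n
  have hFm := hF (n + 1)
  have hGn := hG n
  refine ModuleCat.shortComplex_shortExact _ ?_ ?_ ?_
  · exact mappingCone.exact_map_f _ _ _ _ (τ.naturality S.f).symm _ _ _
      (τ.naturality S.g).symm n (n + 1) rfl
      ((ShortComplex.ShortExact.moduleCat_exact_iff_function_exact _).mp hFm.exact)
      ((ShortComplex.ShortExact.moduleCat_exact_iff_function_exact _).mp hGn.exact)
  · exact mappingCone.injective_map_f _ _ _ _ (τ.naturality S.f).symm n (n + 1) rfl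
      hFm.injective_f hGn.injective_f
  · exact mappingCone.surjective_map_f _ _ _ _ (τ.naturality S.g).symm n (n + 1) rfl
      hFm.surjective_g hGn.surjective_g

end CochainComplex

open CochainComplex

section Koszul

variable (A : Type) [CommRing A]

noncomputable def koszulFunctor : List A → ModuleCat A ⥤ CochainComplex (ModuleCat A) ℤ
  | [] => HomologicalComplex.single (ModuleCat A) (ComplexShape.up ℤ) 0
  | a :: xs => mappingConeFunctor (a • 𝟙 (koszulFunctor xs))

lemma koszulFunctor_obj (M : ModuleCat A) (ys : List A) :
    (koszulFunctor A ys).obj M = koszulComplex A M ys := by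
  induction ys with
  | nil => rfl
  | cons a xs ih =>
    change mappingCone (a • 𝟙 ((koszulFunctor A xs).obj M)) = _
    generalize (koszulFunctor A xs).obj M = K at ih ⊢
    subst ih
    rfl

instance koszulFunctor_additive (ys : List A) : (koszulFunctor A ys).Additive := by
  induction ys with
  | nil => exact inferInstanceAs (HomologicalComplex.single _ _ _).Additive
  | cons a xs _ => exact inferInstanceAs (mappingConeFunctor _).Additive

instance koszulFunctor_linear (ys : List A) : (koszulFunctor A ys).Linear A := by
  induction ys with
  | nil => exact inferInstanceAs ((HomologicalComplex.single _ _ _).Linear A)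
  | cons a xs _ => exact inferInstanceAs ((mappingConeFunctor _).Linear A)

lemma koszulComplex_cons (M : ModuleCat A) (a : A) (ys : List A) :
    koszulComplex A M (a :: ys) = mappingCone ((koszulFunctor A ys).map (a • 𝟙 M)) := by
  rw [← koszulFunctor_obj, Functor.map_smul, (koszulFunctor A ys).map_id]
  rfl

variable {A}

lemma CategoryTheory.ShortComplex.ShortExact.map_koszulFunctor {S : ShortComplex (ModuleCat A)}
    (hS : S.ShortExact) (ys : List A) : (S.map (koszulFunctor A ys)).ShortExact := by
  induction ys with
  | nil => exact hS.map_of_exact (HomologicalComplex.single _ _ 0)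
  | cons a xs ih => exact shortExact_map_mappingConeFunctor _ ih ih

end Koszul

/-- If `x` is a regular element on `M`, then
`Hᵢ(x, y₁,...,yₙ; M) ≅ Hᵢ(y₁,...,yₙ; M/xM)` for all `i`. -/
theorem koszul_homology_quotient_of_regular
    (A : Type) [CommRing A] (M : Type) [AddCommGroup M] [Module A M]
    (x : A) (hx : IsSMulRegular M x) (n : ℕ) (y : Fin n → A) (i : ℕ) :
    Nonempty (↥(koszulHomology A (ModuleCat.of A M) (x :: List.ofFn y) i) ≃ₗ[A]
      ↥(koszulHomology A (ModuleCat.of A (QuotSMulTop x M)) (List.ofFn y) i)) := by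
  set S := ((ModuleCat.of A M).smulShortComplex x).map (koszulFunctor A (List.ofFn y))
  have := mappingCone.quasiIso_descShortComplex
    (hx.smulShortComplex_shortExact (M := ModuleCat.of A M) |>.map_koszulFunctor (List.ofFn y))
  let H := HomologicalComplex.homologyFunctor (ModuleCat A) (ComplexShape.up ℤ) (-(i : ℤ))
  have e₁ : koszulHomology A (ModuleCat.of A M) (x :: List.ofFn y) i ≅ H.obj (mappingCone S.f) :=
    H.mapIso (eqToIso (koszulComplex_cons A _ x _))
  have e₂ : H.obj (mappingCone S.f) ≅ H.obj S.X₃ :=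
    isoOfQuasiIsoAt (mappingCone.descShortComplex S) _
  have e₃ : H.obj S.X₃ ≅ koszulHomology A (ModuleCat.of A (QuotSMulTop x M)) (List.ofFn y) i :=
    H.mapIso (eqToIso (koszulFunctor_obj A _ _))
  exact ⟨(e₁ ≪≫ e₂ ≪≫ e₃).toLinearEquiv⟩
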